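/- In the game G_pos on a positive CNF formula, if Player 1 (who wants the formula true) has a winning strategy, then Player 1 has a winning strategy in which every variable Player 1 sets is set to True. -/
import Mathlib


/-- Evaluation of a positive CNF formula (a list of clauses of un-negated variables). -/
def PosEval {n : ℕ} (F : List (List (Fin n))) (σ : Fin n → Bool) : Prop :=
  ∀ c ∈ F, ∃ v ∈ c, σ v = true

/-- `GposWin F fuel unset σ turn` : the player to move is Player 1 iff `turn = true`;
players alternately pick a previously unset variable and assign it any Boolean value;
after `fuel` moves Player 1 wins iff `F` is true.  This says Player 1 has a
winning strategy. -/
def GposWin {n : ℕ} (F : List (List (Fin n))) :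
    ℕ → Finset (Fin n) → (Fin n → Bool) → Bool → Prop
  | 0, _, σ, _ => PosEval F σ
  | fuel + 1, unset, σ, true =>
      ∃ v ∈ unset, ∃ b : Bool,
        GposWin F fuel (unset.erase v) (Function.update σ v b) false
  | fuel + 1, unset, σ, false =>
      ∀ v ∈ unset, ∀ b : Bool,
        GposWin F fuel (unset.erase v) (Function.update σ v b) true

/-- As `GposWin`, but Player 1 always sets the chosen variable to True. -/
def GposWinTrue {n : ℕ} (F : List (List (Fin n))) :
    ℕ → Finset (Fin n) → (Fin n → Bool) → Bool → Prop
  | 0, _, σ, _ => PosEval F σ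
  | fuel + 1, unset, σ, true =>
      ∃ v ∈ unset,
        GposWinTrue F fuel (unset.erase v) (Function.update σ v true) false
  | fuel + 1, unset, σ, false =>
      ∀ v ∈ unset, ∀ b : Bool,
        GposWinTrue F fuel (unset.erase v) (Function.update σ v b) true

lemma gpos_mono {n : ℕ} (F : List (List (Fin n))) :
    ∀ (fuel : ℕ) (unset : Finset (Fin n)) (σ σ' : Fin n → Bool) (turn : Bool),
      (∀ v, σ v = true → σ' v = true) →
      GposWin F fuel unset σ turn → GposWinTrue F fuel unset σ' turn := by
  intro fuel
  induction fuel with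
  | zero =>
      intro unset σ σ' turn hle h c hc
      obtain ⟨v, hv, hvt⟩ := h c hc
      exact ⟨v, hv, hle v hvt⟩
  | succ fuel ih =>
      intro unset σ σ' turn hle h
      cases turn with
      | true =>
          obtain ⟨v, hv, b, hb⟩ := h
          refine ⟨v, hv, ih _ _ _ _ ?_ hb⟩
          intro w hw
          by_cases hwv : w = v
          · subst hwv; simp [Function.update]
          · simp only [Function.update, dif_neg hwv] at hw ⊢
            exact hle w hw
      | false =>
          intro v hv b
          refine ih _ _ _ _ ?_ (h v hv b)
          intro w hw
          by_cases hwv : w = v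
          · subst hwv; simpa [Function.update] using hw
          · simp only [Function.update, dif_neg hwv] at hw ⊢
            exact hle w hw

/-- If Player 1 has a winning strategy in G_pos, then Player 1 has a winning
strategy in which every variable Player 1 sets is set to True. -/
theorem gpos_player1_can_play_true {n : ℕ} (F : List (List (Fin n)))
    (h : GposWin F n Finset.univ (fun _ => false) true) :
    GposWinTrue F n Finset.univ (fun _ => false) true := by
  exact gpos_mono F n Finset.univ _ _ true (fun v h => h) h
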